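/- arXiv:math/0506236 — 6 statements merged into one kernel-verified Lean document; each statement's English description precedes it below -/
import Mathlib

section
/- For every ε > 0 there exists a positive integer M₀ such that for all integers M ≥ M₀ and all integers d ≥ 1 one has Σ_{i=1}^{d−1} (d+1)^M / ((d−i+1)^M · (i+1)^M) ≤ ε. Equivalently, ε₁(M) := sup_{d≥1} Σ_{i=1}^{d−1} (d+1)^M/((d−i+1)^M (i+1)^M) tends to 0 as M → ∞. -/
lemma sumA (n : ℕ) : ∑ i ∈ Finset.Icc 1 n, (1:ℝ)/((i:ℝ)+1)^2 ≤ 1 - 1/((n:ℝ)+1) := by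
  induction n with
  | zero => simp
  | succ n ih =>
    rw [Finset.sum_Icc_succ_top (by omega)]
    push_cast
    have h1 : (0:ℝ) < (n:ℝ)+1 := by positivity
    have h2 : (0:ℝ) < (n:ℝ)+2 := by positivity
    have : (1:ℝ)/((n:ℝ)+1+1)^2 ≤ 1/((n:ℝ)+1) - 1/((n:ℝ)+1+1) := by
      rw [div_sub_div _ _ (by linarith) (by linarith), div_le_div_iff₀ (by positivity) (by positivity)]
      ring_nf
      nlinarith
    linarith

lemma sumB (d : ℕ) : ∑ i ∈ Finset.Icc 1 (d-1), (1:ℝ)/((d:ℝ)-(i:ℝ)+1)^2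
    = ∑ i ∈ Finset.Icc 1 (d-1), (1:ℝ)/((i:ℝ)+1)^2 := by
  apply Finset.sum_nbij' (fun i => d - i) (fun i => d - i)
  · intro a ha; simp only [Finset.mem_Icc] at *; omega
  · intro a ha; simp only [Finset.mem_Icc] at *; omega
  · intro a ha; simp only [Finset.mem_Icc] at ha; omega
  · intro a ha; simp only [Finset.mem_Icc] at ha; omega
  · intro a ha
    simp only [Finset.mem_Icc] at ha
    have : ((d - a : ℕ) : ℝ) = (d:ℝ) - (a:ℝ) := by
      have : a ≤ d := by omega
      push_cast [this]; ring
    rw [this]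


/-- For every `ε > 0` there exists a positive integer `M₀` such that for all
integers `M ≥ M₀` and all integers `d ≥ 1`,
`∑_{i=1}^{d-1} (d+1)^M / ((d-i+1)^M (i+1)^M) ≤ ε`; i.e. the quantity
`ε₁(M) = sup_{d ≥ 1} ∑_{i=1}^{d-1} (d+1)^M/((d-i+1)^M (i+1)^M)` tends to `0` as `M → ∞`. -/
theorem epsilon_one_tendsto_zero :
    ∀ ε : ℝ, 0 < ε → ∃ M₀ : ℕ, 0 < M₀ ∧ ∀ M : ℕ, M₀ ≤ M → ∀ d : ℕ, 1 ≤ d →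
      ∑ i ∈ Finset.Icc 1 (d - 1),
        ((d : ℝ) + 1) ^ M / (((d : ℝ) - (i : ℝ) + 1) ^ M * ((i : ℝ) + 1) ^ M) ≤ ε := by
  intro ε hε
  obtain ⟨N, hN⟩ := exists_pow_lt_of_lt_one (show (0:ℝ) < ε/4 by linarith)
    (show (3:ℝ)/4 < 1 by norm_num)
  refine ⟨N + 2, by omega, ?_⟩
  intro M hM d hd
  rcases Nat.lt_or_ge d 2 with hd2 | hd2
  · have : d = 1 := by omega
    subst this
    simp
    linarith
  · have hdR : (2:ℝ) ≤ (d:ℝ) := by exact_mod_cast hd2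
    have key : ∀ i ∈ Finset.Icc 1 (d-1),
        ((d : ℝ) + 1) ^ M / (((d : ℝ) - (i : ℝ) + 1) ^ M * ((i : ℝ) + 1) ^ M)
        ≤ ((3:ℝ)/4)^(M-2) * (2 * (1/((i:ℝ)+1))^2 + 2 * (1/((d:ℝ)-(i:ℝ)+1))^2) := by
      intro i hi
      simp only [Finset.mem_Icc] at hi
      have h1 : (1:ℝ) ≤ (i:ℝ) := by exact_mod_cast hi.1
      have h2 : (i:ℝ) + 1 ≤ (d:ℝ) := by
        have : i + 1 ≤ d := by omega
        exact_mod_cast this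
      set x : ℝ := (d:ℝ) with hx
      set y : ℝ := (i:ℝ) with hy
      have hp1 : (0:ℝ) < y + 1 := by linarith
      have hp2 : (0:ℝ) < x - y + 1 := by linarith
      have hden : (0:ℝ) < (x - y + 1) * (y + 1) := mul_pos hp2 hp1
      set r : ℝ := (x + 1) / ((x - y + 1) * (y + 1)) with hrdef
      have hr0 : 0 ≤ r := by positivity
      have hr34 : r ≤ 3/4 := by
        rw [hrdef, div_le_iff₀ hden]
        nlinarith [mul_nonneg (sub_nonneg.2 h1) (by linarith : (0:ℝ) ≤ x - 1 - y)]
      have hrab : r ≤ 1/(y+1) + 1/(x-y+1) := by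
        rw [hrdef, div_add_div _ _ (ne_of_gt hp1) (ne_of_gt hp2),
          div_le_div_iff₀ hden (by positivity)]
        nlinarith
      have hM2 : M - 2 + 2 = M := by omega
      calc ((d : ℝ) + 1) ^ M / (((d : ℝ) - (i : ℝ) + 1) ^ M * ((i : ℝ) + 1) ^ M)
          = r ^ M := by rw [hrdef, div_pow, mul_pow]
        _ = r ^ (M-2) * r ^ 2 := by rw [← pow_add, hM2]
        _ ≤ ((3:ℝ)/4)^(M-2) * (1/(y+1) + 1/(x-y+1))^2 := by
            apply mul_le_mul (pow_le_pow_left₀ hr0 hr34 _)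
              (pow_le_pow_left₀ hr0 hrab 2) (by positivity) (by positivity)
        _ ≤ ((3:ℝ)/4)^(M-2) * (2 * (1/(y+1))^2 + 2 * (1/(x-y+1))^2) := by
            have := sq_nonneg (1/(y+1) - 1/(x-y+1))
            have h34 : (0:ℝ) ≤ ((3:ℝ)/4)^(M-2) := by positivity
            nlinarith
    have sum2 : ∑ i ∈ Finset.Icc 1 (d-1),
        (2 * (1/((i:ℝ)+1))^2 + 2 * (1/((d:ℝ)-(i:ℝ)+1))^2) ≤ 4 := by
      rw [Finset.sum_add_distrib, ← Finset.mul_sum, ← Finset.mul_sum]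
      have e1 : ∀ i : ℕ, ((1:ℝ)/((i:ℝ)+1))^2 = 1/((i:ℝ)+1)^2 := by
        intro i; rw [div_pow, one_pow]
      have e2 : ∀ i : ℕ, ((1:ℝ)/((d:ℝ)-(i:ℝ)+1))^2 = 1/((d:ℝ)-(i:ℝ)+1)^2 := by
        intro i; rw [div_pow, one_pow]
      simp only [e1, e2]
      rw [sumB]
      have hA := sumA (d-1)
      have : (0:ℝ) < ((d-1:ℕ):ℝ) + 1 := by positivity
      have : (0:ℝ) ≤ 1/(((d-1:ℕ):ℝ) + 1) := by positivity
      nlinarith [sumA (d-1)]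
    calc ∑ i ∈ Finset.Icc 1 (d - 1),
        ((d : ℝ) + 1) ^ M / (((d : ℝ) - (i : ℝ) + 1) ^ M * ((i : ℝ) + 1) ^ M)
        ≤ ∑ i ∈ Finset.Icc 1 (d-1),
          ((3:ℝ)/4)^(M-2) * (2 * (1/((i:ℝ)+1))^2 + 2 * (1/((d:ℝ)-(i:ℝ)+1))^2) :=
          Finset.sum_le_sum key
      _ = ((3:ℝ)/4)^(M-2) * ∑ i ∈ Finset.Icc 1 (d-1),
          (2 * (1/((i:ℝ)+1))^2 + 2 * (1/((d:ℝ)-(i:ℝ)+1))^2) := by rw [Finset.mul_sum]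
      _ ≤ ((3:ℝ)/4)^(M-2) * 4 := by
          apply mul_le_mul_of_nonneg_left sum2 (by positivity)
      _ ≤ ((3:ℝ)/4)^N * 4 := by
          apply mul_le_mul_of_nonneg_right _ (by norm_num)
          exact pow_le_pow_of_le_one (by norm_num) (by norm_num) (by omega)
      _ ≤ ε := by linarith
end

section
/- For every integer M ≥ 2 and every ε > 0 there exists C₀ > 1 such that for all real C ≥ C₀ and all integers d ≥ 1 one has Σ_{i=1}^{d} C^{−i} (d+1)^M/(d+1−i)^M ≤ ε. Equivalently, for fixed M ≥ 2, ε₂(C, M) := sup_{d≥1} Σ_{i=1}^{d} C^{−i}(d+1)^M/(d+1−i)^M tends to 0 as C → ∞. -/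
/-! Since `d + 1 ≤ (i + 1)(d + 1 - i) ≤ 2^i (d + 1 - i)` for `i ≤ d`, the `i`-th term is at
most `(2^M / C)^i`, so the sum is dominated by a geometric series with ratio `2^M / C`, whose
sum `2^M / (C - 2^M)` is small once `C` is large. -/

open Finset

lemma add_one_div_sub_le_two_pow {i d : ℕ} (hid : i ≤ d) :
    ((d : ℝ) + 1) / ((d : ℝ) + 1 - i) ≤ 2 ^ i := by
  have hi : (i : ℝ) ≤ d := by exact_mod_cast hid
  have hpos : (0 : ℝ) < (d : ℝ) + 1 - i := by linarith
  have hsucc : (i : ℝ) + 1 ≤ 2 ^ i := by exact_mod_cast Nat.lt_two_pow_self (n := i)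
  rw [div_le_iff₀ hpos]
  calc (d : ℝ) + 1 ≤ ((i : ℝ) + 1) * ((d : ℝ) + 1 - i) := by
        nlinarith [(i.cast_nonneg : (0 : ℝ) ≤ i)]
    _ ≤ 2 ^ i * ((d : ℝ) + 1 - i) := by gcongr

lemma term_le_geometric (M : ℕ) {C : ℝ} (hC : 0 < C) {i d : ℕ} (hid : i ≤ d) :
    ((d : ℝ) + 1) ^ M / (C ^ i * ((d : ℝ) + 1 - i) ^ M) ≤ (2 ^ M / C) ^ i := by
  have hpos : (0 : ℝ) < (d : ℝ) + 1 - i := by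
    have : (i : ℝ) ≤ d := by exact_mod_cast hid
    linarith
  calc ((d : ℝ) + 1) ^ M / (C ^ i * ((d : ℝ) + 1 - i) ^ M)
      = (((d : ℝ) + 1) / ((d : ℝ) + 1 - i)) ^ M / C ^ i := by
        rw [div_pow, div_div, mul_comm]
    _ ≤ ((2 : ℝ) ^ i) ^ M / C ^ i := by
        gcongr
        exact add_one_div_sub_le_two_pow hid
    _ = (2 ^ M / C) ^ i := by rw [div_pow, ← pow_mul, ← pow_mul, mul_comm]

lemma sum_Icc_pow_le_div_one_sub {r : ℝ} (hr₀ : 0 ≤ r) (hr₁ : r < 1) (d : ℕ) :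
    ∑ i ∈ Icc 1 d, r ^ i ≤ r / (1 - r) := by
  simpa only [Ico_add_one_right_eq_Icc, pow_one] using
    geom_sum_Ico_le_of_lt_one (m := 1) (n := d + 1) hr₀ hr₁

lemma sum_le_two_pow_div_sub (M : ℕ) {C : ℝ} (hC : 2 ^ M < C) (d : ℕ) :
    ∑ i ∈ Icc 1 d, ((d : ℝ) + 1) ^ M / (C ^ i * ((d : ℝ) + 1 - i) ^ M) ≤
      2 ^ M / (C - 2 ^ M) := by
  have h2M : (0 : ℝ) < 2 ^ M := by positivity
  have hC₀ : 0 < C := h2M.trans hC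
  have hr₁ : 2 ^ M / C < 1 := (div_lt_one hC₀).2 hC
  calc ∑ i ∈ Icc 1 d, ((d : ℝ) + 1) ^ M / (C ^ i * ((d : ℝ) + 1 - i) ^ M)
      ≤ ∑ i ∈ Icc 1 d, (2 ^ M / C) ^ i :=
        sum_le_sum fun i hi => term_le_geometric M hC₀ (mem_Icc.1 hi).2
    _ ≤ 2 ^ M / C / (1 - 2 ^ M / C) := sum_Icc_pow_le_div_one_sub (by positivity) hr₁ d
    _ = 2 ^ M / (C - 2 ^ M) := by field_simp

theorem epsilon_two_tendsto_zero_general (M : ℕ) :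
    ∀ ε : ℝ, 0 < ε → ∃ C₀ : ℝ, 1 < C₀ ∧ ∀ C : ℝ, C₀ ≤ C → ∀ d : ℕ, 1 ≤ d →
      ∑ i ∈ Finset.Icc 1 d,
        ((d : ℝ) + 1) ^ M / (C ^ i * ((d : ℝ) + 1 - (i : ℝ)) ^ M) ≤ ε := by
  intro ε hε
  have h2M : (1 : ℝ) ≤ 2 ^ M := one_le_pow₀ one_le_two
  have hgap : 0 < 2 ^ M / ε := by positivity
  refine ⟨2 ^ M + 2 ^ M / ε, by linarith, fun C hC d _ => ?_⟩
  calc _ ≤ 2 ^ M / (C - 2 ^ M) := sum_le_two_pow_div_sub M (by linarith) d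
    _ ≤ 2 ^ M / (2 ^ M / ε) := by gcongr; linarith
    _ = ε := by field_simp

/-- For every integer `M ≥ 2` and every `ε > 0` there exists `C₀ > 1` such that
for all real `C ≥ C₀` and all integers `d ≥ 1`,
`∑_{i=1}^{d} C^{-i} (d+1)^M / (d+1-i)^M ≤ ε`; i.e. for fixed `M ≥ 2` the quantity
`ε₂(C, M) = sup_{d ≥ 1} ∑_{i=1}^d C^{-i} (d+1)^M/(d+1-i)^M` tends to `0` as `C → ∞`. -/
theorem epsilon_two_tendsto_zero (M : ℕ) (hM : 2 ≤ M) :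
    ∀ ε : ℝ, 0 < ε → ∃ C₀ : ℝ, 1 < C₀ ∧ ∀ C : ℝ, C₀ ≤ C → ∀ d : ℕ, 1 ≤ d →
      ∑ i ∈ Finset.Icc 1 d,
        ((d : ℝ) + 1) ^ M / (C ^ i * ((d : ℝ) + 1 - (i : ℝ)) ^ M) ≤ ε :=
  epsilon_two_tendsto_zero_general M
end

section
/- If two coefficient families A and B both belong to the class 𝒪^{ℏ,ℏ⁻¹}(ρ), then so does their Cauchy product (A·B)(m,n) = Σ_{m₁+m₂=m} Σ_{n₁+n₂=n} A(m₁,n₁)·B(m₂,n₂); consequently 𝒪^{ℏ,ℏ⁻¹}(ρ) is closed under addition and multiplication, i.e. it is a subring of the ring of formal series Σ A(m,n) x^m ℏ^{−n}. -/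
open scoped BigOperators Classical

/-- The pairing `⟨ρ, m⟩ = ∑_{a=1}^r ξ_a m_a` of the nef class `ρ` with a multi-index
`m ∈ ℕ^s` (only the first `r` components of `m` enter). -/
def nefPairing (s r : ℕ) (hrs : r ≤ s) (ξ : Fin r → ℝ) (m : Fin s → ℕ) : ℝ :=
  ∑ a : Fin r, ξ a * (m (Fin.castLE hrs a) : ℝ)

/-- Membership in the class `𝒪^{ℏ,ℏ⁻¹}(ρ)` of coefficient families `A : ℕ^s × ℤ → ℂ`:
(0) for each `m` only finitely many `n` have `A(m,n) ≠ 0`;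
(i) `A(m,n) = 0` whenever `-n > ⟨ρ,m⟩`;
(ii) there are `B, C > 0` with `|A(m,n)| ≤ B C^{|m|+|n|}/n!` for `n ≥ 0` and
`|A(m,n)| ≤ B C^{|m|+|n|} (-n)!` for `n ≤ 0`. -/
def MemOhh (s r : ℕ) (hrs : r ≤ s) (ξ : Fin r → ℝ) (A : (Fin s → ℕ) → ℤ → ℂ) : Prop :=
  (∀ m : Fin s → ℕ, {n : ℤ | A m n ≠ 0}.Finite) ∧
  (∀ (m : Fin s → ℕ) (n : ℤ), nefPairing s r hrs ξ m < -(n : ℝ) → A m n = 0) ∧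
  (∃ B C : ℝ, 0 < B ∧ 0 < C ∧ ∀ (m : Fin s → ℕ) (n : ℤ),
    ‖A m n‖ ≤ B * C ^ ((∑ j, m j) + n.natAbs) *
      (if 0 ≤ n then 1 / (Nat.factorial n.toNat : ℝ) else (Nat.factorial n.natAbs : ℝ)))

/-- The Cauchy product `(A·B)(m,n) = ∑_{m₁+m₂=m} ∑_{n₁+n₂=n} A(m₁,n₁) B(m₂,n₂)` of two
doubly-indexed coefficient families; the (a priori infinite) sum over `n₁ + n₂ = n` is taken
as a `tsum`, which is a genuine finite sum for families with finite `ℤ`-support. -/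
noncomputable def cauchyProdZ (s : ℕ) (A B : (Fin s → ℕ) → ℤ → ℂ) :
    (Fin s → ℕ) → ℤ → ℂ :=
  fun m n => ∑' p : (Fin s → ℕ) × ℤ,
    if p.1 ≤ m then A p.1 p.2 * B (fun j => m j - p.1 j) (n - p.2) else 0

/-!
A term `A(m₁,n₁) B(m₂,n₂)` of the Cauchy product is controlled by the weight inequality
`w(n₁) w(n₂) ≤ 2^{|n₁|+|n₂|} w(n₁+n₂)` for `w(n) = 1/n!` (`n ≥ 0`), `w(n) = (-n)!` (`n ≤ 0`),
which is `(a+b)! ≤ 2^{a+b} a! b!` or `a! b! ≤ (a+b)!` according to the signs. Condition (i)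
bounds the number of terms: `n₁` and `n - n₁` are both at least `-N` with
`N = ⌈∑ ξ_a⌉ |m|`, so only `O(2^{|m|} (|n| + N))` terms survive. Since `N` is linear in `|m|`,
every loss is exponential in `|m| + |n|` and is absorbed into a larger constant `C`.
-/

open Finset
open scoped Nat

lemma Nat.factorial_add_le_two_pow_mul (a b : ℕ) : (a + b)! ≤ 2 ^ (a + b) * (a ! * b !) := by
  rw [← Nat.add_choose_mul_factorial_mul_factorial a b, mul_assoc]
  gcongr
  exact Nat.choose_le_two_pow _ _

lemma Nat.factorial_mul_factorial_le_factorial_add (a b : ℕ) : a ! * b ! ≤ (a + b)! :=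
  Nat.le_of_dvd (Nat.factorial_pos _) (Nat.factorial_mul_factorial_dvd_factorial_add a b)

lemma Finset.card_Icc_zero_le_two_pow_sum {ι : Type*} [Fintype ι] [DecidableEq ι] (m : ι → ℕ) :
    #(Icc 0 m) ≤ 2 ^ ∑ i, m i := by
  rw [Pi.card_Icc, ← prod_pow_eq_pow_sum]
  refine prod_le_prod' fun i _ => ?_
  simpa using Nat.lt_two_pow_self (n := m i)

noncomputable def ohhWeight (n : ℤ) : ℝ :=
  if 0 ≤ n then 1 / (n.toNat ! : ℝ) else (n.natAbs ! : ℝ)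

lemma ohhWeight_pos (n : ℤ) : 0 < ohhWeight n := by
  unfold ohhWeight; split <;> positivity

lemma ohhWeight_natCast (n : ℕ) : ohhWeight n = 1 / n ! := by
  simp [ohhWeight]

lemma ohhWeight_neg_natCast (n : ℕ) : ohhWeight (-n) = n ! := by
  rcases n with _ | n
  · simp [ohhWeight]
  · rw [ohhWeight, if_neg (by omega), Int.natAbs_neg, Int.natAbs_natCast]

lemma ohhWeight_natCast_mul_neg_natCast_le (a b : ℕ) :
    ohhWeight a * ohhWeight (-b) ≤ 2 ^ (a + b) * ohhWeight (a - b) := by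
  rw [ohhWeight_natCast, ohhWeight_neg_natCast]
  rcases le_total b a with h | h
  · obtain ⟨c, rfl⟩ := Nat.exists_eq_add_of_le h
    rw [show ((b + c : ℕ) : ℤ) - b = c by push_cast; ring, ohhWeight_natCast,
      div_mul_eq_mul_div, one_mul, div_le_iff₀ (by positivity)]
    calc (b ! : ℝ) ≤ (b + c)! / c ! := by
          rw [le_div_iff₀ (by positivity)]
          exact_mod_cast Nat.factorial_mul_factorial_le_factorial_add b c
      _ ≤ 2 ^ (b + c + b) * ((b + c)! / c !) :=
          le_mul_of_one_le_left (by positivity) (one_le_pow₀ (by norm_num))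
      _ = 2 ^ (b + c + b) * (1 / c !) * (b + c)! := by ring
  · obtain ⟨c, rfl⟩ := Nat.exists_eq_add_of_le h
    rw [show (a : ℤ) - (a + c : ℕ) = -c by push_cast; ring, ohhWeight_neg_natCast,
      div_mul_eq_mul_div, one_mul, div_le_iff₀ (by positivity)]
    calc ((a + c)! : ℝ) ≤ 2 ^ (a + c) * (a ! * c !) := by
          exact_mod_cast Nat.factorial_add_le_two_pow_mul a c
      _ ≤ 2 ^ (a + (a + c)) * (a ! * c !) := by gcongr <;> norm_num
      _ = 2 ^ (a + (a + c)) * c ! * a ! := by ring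

lemma ohhWeight_mul_le (a b : ℤ) :
    ohhWeight a * ohhWeight b ≤ 2 ^ (a.natAbs + b.natAbs) * ohhWeight (a + b) := by
  obtain ⟨x, rfl | rfl⟩ := Int.eq_nat_or_neg a <;> obtain ⟨y, rfl | rfl⟩ := Int.eq_nat_or_neg b
  · rw [← Nat.cast_add, ohhWeight_natCast, ohhWeight_natCast, ohhWeight_natCast,
      Int.natAbs_natCast, Int.natAbs_natCast, div_mul_div_comm, one_mul, mul_one_div,
      div_le_div_iff₀ (by positivity) (by positivity), one_mul]
    exact_mod_cast Nat.factorial_add_le_two_pow_mul x y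
  · simpa [← sub_eq_add_neg] using ohhWeight_natCast_mul_neg_natCast_le x y
  · simpa [mul_comm, add_comm, ← sub_eq_add_neg] using ohhWeight_natCast_mul_neg_natCast_le y x
  · rw [← neg_add, ← Nat.cast_add, ohhWeight_neg_natCast, ohhWeight_neg_natCast,
      ohhWeight_neg_natCast, Int.natAbs_neg, Int.natAbs_neg, Int.natAbs_natCast,
      Int.natAbs_natCast]
    calc (x ! * y ! : ℝ) ≤ (x + y)! := by
          exact_mod_cast Nat.factorial_mul_factorial_le_factorial_add x y
      _ ≤ 2 ^ (x + y) * (x + y)! :=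
          le_mul_of_one_le_left (by positivity) (one_le_pow₀ (by norm_num))

section nefPairing

variable {s r : ℕ} {hrs : r ≤ s} {ξ : Fin r → ℝ}

lemma nefPairing_add_sub {m₁ m : Fin s → ℕ} (h : m₁ ≤ m) :
    nefPairing s r hrs ξ m₁ + nefPairing s r hrs ξ (m - m₁) = nefPairing s r hrs ξ m := by
  simp only [nefPairing, ← sum_add_distrib, Pi.sub_apply, Nat.cast_sub (h _)]
  exact sum_congr rfl fun a _ => by ring

lemma nefPairing_mono (hξ : ∀ a, 0 ≤ ξ a) {m₁ m : Fin s → ℕ} (h : m₁ ≤ m) :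
    nefPairing s r hrs ξ m₁ ≤ nefPairing s r hrs ξ m :=
  sum_le_sum fun a _ => mul_le_mul_of_nonneg_left (Nat.cast_le.2 (h _)) (hξ a)

lemma nefPairing_le_ceil_mul_sum (hξ : ∀ a, 0 ≤ ξ a) (m : Fin s → ℕ) :
    nefPairing s r hrs ξ m ≤ ((⌈∑ a, ξ a⌉₊ * ∑ j, m j : ℕ) : ℝ) := by
  calc nefPairing s r hrs ξ m ≤ ∑ a, ξ a * ((∑ j, m j : ℕ) : ℝ) :=
        sum_le_sum fun a _ => mul_le_mul_of_nonneg_left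
          (Nat.cast_le.2 (single_le_sum (fun j _ => Nat.zero_le (m j)) (mem_univ _))) (hξ a)
    _ ≤ ((⌈∑ a, ξ a⌉₊ * ∑ j, m j : ℕ) : ℝ) := by
        rw [← sum_mul, Nat.cast_mul]
        gcongr
        exact Nat.le_ceil _

end nefPairing

section cauchyProdZ

variable {s : ℕ} {A B : (Fin s → ℕ) → ℤ → ℂ}

lemma cauchyProdZ_eq_tsum (m : Fin s → ℕ) (n : ℤ) :
    cauchyProdZ s A B m n =
      ∑' p : (Fin s → ℕ) × ℤ, if p.1 ≤ m then A p.1 p.2 * B (m - p.1) (n - p.2) else 0 :=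
  rfl

lemma exists_ne_zero_of_cauchyProdZ_ne_zero {m : Fin s → ℕ} {n : ℤ}
    (h : cauchyProdZ s A B m n ≠ 0) :
    ∃ m₁ ≤ m, ∃ n₁, A m₁ n₁ ≠ 0 ∧ B (m - m₁) (n - n₁) ≠ 0 := by
  contrapose! h
  rw [cauchyProdZ_eq_tsum]
  refine (tsum_congr fun p => ?_).trans tsum_zero
  split_ifs with hp
  · by_cases hA : A p.1 p.2 = 0
    · rw [hA, zero_mul]
    · rw [h p.1 hp p.2 hA, mul_zero]
  · rfl

lemma setOf_cauchyProdZ_ne_zero_finite (hA : ∀ m, {n | A m n ≠ 0}.Finite)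
    (hB : ∀ m, {n | B m n ≠ 0}.Finite) (m : Fin s → ℕ) :
    {n | cauchyProdZ s A B m n ≠ 0}.Finite := by
  refine (((Set.finite_Iic m).biUnion fun m₁ _ => hA m₁).add
    ((Set.finite_Iic m).biUnion fun m₂ _ => hB m₂)).subset fun n hn => ?_
  obtain ⟨m₁, hm₁, n₁, hA₁, hB₁⟩ := exists_ne_zero_of_cauchyProdZ_ne_zero hn
  exact ⟨n₁, Set.mem_biUnion hm₁ hA₁, n - n₁, Set.mem_biUnion (tsub_le_self (a := m)) hB₁,
    add_sub_cancel n₁ n⟩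

lemma cauchyProdZ_eq_zero_of_nefPairing_lt {r : ℕ} {hrs : r ≤ s} {ξ : Fin r → ℝ}
    (hA : ∀ m (n : ℤ), nefPairing s r hrs ξ m < -(n : ℝ) → A m n = 0)
    (hB : ∀ m (n : ℤ), nefPairing s r hrs ξ m < -(n : ℝ) → B m n = 0)
    {m : Fin s → ℕ} {n : ℤ} (h : nefPairing s r hrs ξ m < -(n : ℝ)) :
    cauchyProdZ s A B m n = 0 := by
  by_contra hne
  obtain ⟨m₁, hm₁, n₁, hA₁, hB₁⟩ := exists_ne_zero_of_cauchyProdZ_ne_zero hne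
  have h₁ := not_lt.1 (mt (hA _ _) hA₁)
  have h₂ := not_lt.1 (mt (hB _ _) hB₁)
  have := nefPairing_add_sub (hrs := hrs) (ξ := ξ) hm₁
  push_cast at h₂
  linarith

end cauchyProdZ

section OhhBounded

variable {s : ℕ} {A B : (Fin s → ℕ) → ℤ → ℂ} {a b C : ℝ}

def OhhBounded (A : (Fin s → ℕ) → ℤ → ℂ) (b C : ℝ) : Prop :=
  ∀ m n, ‖A m n‖ ≤ b * C ^ ((∑ j, m j) + n.natAbs) * ohhWeight n

lemma OhhBounded.mono {C' : ℝ} (hA : OhhBounded A b C) (hb : 0 ≤ b) (hC : 0 ≤ C)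
    (hCC' : C ≤ C') : OhhBounded A b C' := fun m n =>
  (hA m n).trans <| by gcongr; exact (ohhWeight_pos n).le

lemma OhhBounded.add (hA : OhhBounded A a C) (hB : OhhBounded B b C) :
    OhhBounded (fun m n => A m n + B m n) (a + b) C := fun m n =>
  (norm_add_le _ _).trans <| (add_le_add (hA m n) (hB m n)).trans_eq (by ring)

lemma OhhBounded.norm_mul_le (hA : OhhBounded A a C) (hB : OhhBounded B b C) (ha : 0 ≤ a)
    (hb : 0 ≤ b) (hC : 1 ≤ C) {m₁ m : Fin s → ℕ} (h : m₁ ≤ m) (n₁ n : ℤ) :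
    ‖A m₁ n₁ * B (m - m₁) (n - n₁)‖ ≤
      a * b * (2 * C) ^ ((∑ j, m j) + n₁.natAbs + (n - n₁).natAbs) * ohhWeight n := by
  have hsum : (∑ j, m₁ j) + ∑ j, (m - m₁) j = ∑ j, m j := by
    rw [← sum_add_distrib]
    exact sum_congr rfl fun j _ => add_tsub_cancel_of_le (h j)
  have hw := ohhWeight_mul_le n₁ (n - n₁)
  rw [add_sub_cancel] at hw
  have := ohhWeight_pos n₁; have := ohhWeight_pos (n - n₁); have := ohhWeight_pos n
  calc ‖A m₁ n₁ * B (m - m₁) (n - n₁)‖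
      ≤ (a * C ^ ((∑ j, m₁ j) + n₁.natAbs) * ohhWeight n₁) *
          (b * C ^ ((∑ j, (m - m₁) j) + (n - n₁).natAbs) * ohhWeight (n - n₁)) := by
        rw [norm_mul]
        exact mul_le_mul (hA _ _) (hB _ _) (norm_nonneg _) (by positivity)
    _ = a * b * C ^ ((∑ j, m j) + n₁.natAbs + (n - n₁).natAbs) *
          (ohhWeight n₁ * ohhWeight (n - n₁)) := by
        rw [← hsum]; ring
    _ ≤ a * b * C ^ ((∑ j, m j) + n₁.natAbs + (n - n₁).natAbs) *
          (2 ^ (n₁.natAbs + (n - n₁).natAbs) * ohhWeight n) := by gcongr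
    _ = a * b * (2 ^ (n₁.natAbs + (n - n₁).natAbs) *
          C ^ ((∑ j, m j) + n₁.natAbs + (n - n₁).natAbs)) * ohhWeight n := by ring
    _ ≤ a * b * (2 ^ ((∑ j, m j) + n₁.natAbs + (n - n₁).natAbs) *
          C ^ ((∑ j, m j) + n₁.natAbs + (n - n₁).natAbs)) * ohhWeight n := by
        gcongr
        · norm_num
        · omega
    _ = a * b * (2 * C) ^ ((∑ j, m j) + n₁.natAbs + (n - n₁).natAbs) * ohhWeight n := by
        rw [mul_pow]

end OhhBounded

section estimate

variable {s : ℕ} {A B : (Fin s → ℕ) → ℤ → ℂ} {a b C : ℝ} {m : Fin s → ℕ} {N : ℕ}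

lemma cauchyProdZ_eq_sum (hA : ∀ m₁ ≤ m, ∀ n₁ < -(N : ℤ), A m₁ n₁ = 0)
    (hB : ∀ m₂ ≤ m, ∀ n₂ < -(N : ℤ), B m₂ n₂ = 0) (n : ℤ) :
    cauchyProdZ s A B m n =
      ∑ p ∈ Icc 0 m ×ˢ Icc (-(N : ℤ)) (n + N), A p.1 p.2 * B (m - p.1) (n - p.2) := by
  rw [cauchyProdZ_eq_tsum, tsum_eq_sum]
  · exact sum_congr rfl fun p hp => if_pos (mem_Icc.1 (mem_product.1 hp).1).2
  · intro p hp
    split_ifs with hm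
    · have hp₂ : p.2 ∉ Icc (-(N : ℤ)) (n + N) := fun h =>
        hp (mem_product.2 ⟨mem_Icc.2 ⟨fun _ => Nat.zero_le _, hm⟩, h⟩)
      have : p.2 < -N ∨ n - p.2 < -N := by
        rw [mem_Icc] at hp₂
        omega
      rcases this with h | h
      · rw [hA _ hm _ h, zero_mul]
      · rw [hB _ tsub_le_self _ h, mul_zero]
    · rfl

lemma card_Icc_zero_product_Icc_le (n : ℤ) :
    #(Icc 0 m ×ˢ Icc (-(N : ℤ)) (n + N)) ≤ 2 ^ ((∑ j, m j) + n.natAbs + 2 * N) := by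
  have := Nat.lt_two_pow_self (n := n.natAbs + 2 * N)
  calc #(Icc 0 m ×ˢ Icc (-(N : ℤ)) (n + N)) = #(Icc 0 m) * (n + N + 1 - -(N : ℤ)).toNat := by
        rw [card_product, Int.card_Icc]
    _ ≤ 2 ^ (∑ j, m j) * 2 ^ (n.natAbs + 2 * N) :=
        Nat.mul_le_mul (card_Icc_zero_le_two_pow_sum m) (by omega)
    _ = 2 ^ ((∑ j, m j) + n.natAbs + 2 * N) := by ring

lemma OhhBounded.norm_cauchyProdZ_le (hA : OhhBounded A a C) (hB : OhhBounded B b C)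
    (ha : 0 ≤ a) (hb : 0 ≤ b) (hC : 1 ≤ C) (hAN : ∀ m₁ ≤ m, ∀ n₁ < -(N : ℤ), A m₁ n₁ = 0)
    (hBN : ∀ m₂ ≤ m, ∀ n₂ < -(N : ℤ), B m₂ n₂ = 0) (n : ℤ) :
    ‖cauchyProdZ s A B m n‖ ≤
      a * b * (2 * C) ^ (2 * ∑ j, m j + 3 * n.natAbs + 4 * N) * ohhWeight n := by
  set T := Icc 0 m ×ˢ Icc (-(N : ℤ)) (n + N)
  set X := a * b * (2 * C) ^ ((∑ j, m j) + 2 * n.natAbs + 2 * N) * ohhWeight n with hX_def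
  have hX : 0 ≤ X := by have := ohhWeight_pos n; positivity
  have hterm : ∀ p ∈ T, ‖A p.1 p.2 * B (m - p.1) (n - p.2)‖ ≤ X := by
    intro p hp
    obtain ⟨hp₁, hp₂⟩ := mem_product.1 hp
    rw [mem_Icc] at hp₁ hp₂
    refine (hA.norm_mul_le hB ha hb hC hp₁.2 p.2 n).trans ?_
    rw [hX_def]
    refine mul_le_mul_of_nonneg_right (mul_le_mul_of_nonneg_left ?_ (mul_nonneg ha hb))
      (ohhWeight_pos n).le
    exact pow_le_pow_right₀ (by linarith) (by omega)
  have hcard : (#T : ℝ) ≤ (2 * C) ^ ((∑ j, m j) + n.natAbs + 2 * N) :=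
    calc (#T : ℝ) ≤ 2 ^ ((∑ j, m j) + n.natAbs + 2 * N) := by
          exact_mod_cast card_Icc_zero_product_Icc_le n
      _ ≤ (2 * C) ^ ((∑ j, m j) + n.natAbs + 2 * N) :=
          pow_le_pow_left₀ zero_le_two (by linarith) _
  rw [cauchyProdZ_eq_sum hAN hBN]
  calc ‖∑ p ∈ T, A p.1 p.2 * B (m - p.1) (n - p.2)‖
      ≤ ∑ p ∈ T, ‖A p.1 p.2 * B (m - p.1) (n - p.2)‖ := norm_sum_le _ _
    _ ≤ #T * X := by rw [← nsmul_eq_mul]; exact sum_le_card_nsmul _ _ _ hterm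
    _ ≤ (2 * C) ^ ((∑ j, m j) + n.natAbs + 2 * N) * X := mul_le_mul_of_nonneg_right hcard hX
    _ = a * b * (2 * C) ^ (2 * ∑ j, m j + 3 * n.natAbs + 4 * N) * ohhWeight n := by ring

end estimate

namespace MemOhh

variable {s r : ℕ} {hrs : r ≤ s} {ξ : Fin r → ℝ} {A B : (Fin s → ℕ) → ℤ → ℂ}

lemma eq_zero_of_lt_neg_ceil_mul_sum (hξ : ∀ a, 0 ≤ ξ a) (hA : MemOhh s r hrs ξ A)
    {m₁ m : Fin s → ℕ} (h : m₁ ≤ m) {n : ℤ}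
    (hn : n < -((⌈∑ a, ξ a⌉₊ * ∑ j, m j : ℕ) : ℤ)) : A m₁ n = 0 :=
  hA.2.1 m₁ n <| (nefPairing_mono hξ h).trans_lt <|
    (nefPairing_le_ceil_mul_sum hξ m).trans_lt <| by exact_mod_cast (by omega : _ < -n)

theorem add (hA : MemOhh s r hrs ξ A) (hB : MemOhh s r hrs ξ B) :
    MemOhh s r hrs ξ (fun m n => A m n + B m n) := by
  obtain ⟨hA0, hA1, a, CA, ha, hCA, hAb⟩ := hA
  obtain ⟨hB0, hB1, b, CB, hb, hCB, hBb⟩ := hB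
  refine ⟨fun m => ((hA0 m).union (hB0 m)).subset fun n hn => ?_,
    fun m n h => by simp [hA1 m n h, hB1 m n h], a + b, max CA CB, by positivity,
    lt_max_of_lt_left hCA, ?_⟩
  · by_contra hn'
    simp_all
  · exact (OhhBounded.mono hAb ha.le hCA.le (le_max_left _ _)).add
      (OhhBounded.mono hBb hb.le hCB.le (le_max_right _ _))

theorem mul (hξ : ∀ a, 0 ≤ ξ a) (hA : MemOhh s r hrs ξ A) (hB : MemOhh s r hrs ξ B) :
    MemOhh s r hrs ξ (cauchyProdZ s A B) := by
  obtain ⟨a, CA, ha, hCA, hAb⟩ := hA.2.2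
  obtain ⟨b, CB, hb, hCB, hBb⟩ := hB.2.2
  set C := max 1 (max CA CB)
  set K := ⌈∑ a, ξ a⌉₊
  have hC : 1 ≤ C := le_max_left _ _
  have hCA' : CA ≤ C := (le_max_left _ _).trans (le_max_right _ _)
  have hCB' : CB ≤ C := (le_max_right _ _).trans (le_max_right _ _)
  refine ⟨setOf_cauchyProdZ_ne_zero_finite hA.1 hB.1,
    fun m n => cauchyProdZ_eq_zero_of_nefPairing_lt hA.2.1 hB.2.1, a * b, (2 * C) ^ (4 * K + 3),
    by positivity, by positivity, fun m n => ?_⟩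
  calc ‖cauchyProdZ s A B m n‖
      ≤ a * b * (2 * C) ^ (2 * ∑ j, m j + 3 * n.natAbs + 4 * (K * ∑ j, m j)) * ohhWeight n :=
        (OhhBounded.mono hAb ha.le hCA.le hCA').norm_cauchyProdZ_le
          (OhhBounded.mono hBb hb.le hCB.le hCB') ha.le hb.le
          hC (fun _ h _ hn => hA.eq_zero_of_lt_neg_ceil_mul_sum hξ h hn)
          (fun _ h _ hn => hB.eq_zero_of_lt_neg_ceil_mul_sum hξ h hn) n
    _ ≤ a * b * ((2 * C) ^ (4 * K + 3)) ^ ((∑ j, m j) + n.natAbs) * ohhWeight n := by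
        rw [← pow_mul]
        refine mul_le_mul_of_nonneg_right (mul_le_mul_of_nonneg_left ?_ (by positivity))
          (ohhWeight_pos n).le
        exact pow_le_pow_right₀ (by linarith)
          (by nlinarith [Nat.zero_le (K * n.natAbs), Nat.zero_le (∑ j, m j)])

end MemOhh

theorem memOhh_add_and_mul_general (s r : ℕ) (hrs : r ≤ s)
    (ξ : Fin r → ℝ) (hξ : ∀ a, 0 ≤ ξ a)
    (A B : (Fin s → ℕ) → ℤ → ℂ)
    (hA : MemOhh s r hrs ξ A) (hB : MemOhh s r hrs ξ B) :
    MemOhh s r hrs ξ (fun m n => A m n + B m n) ∧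
    MemOhh s r hrs ξ (cauchyProdZ s A B) :=
  ⟨hA.add hB, hA.mul hξ hB⟩

/-- If `A` and `B` both belong to `𝒪^{ℏ,ℏ⁻¹}(ρ)` then so do `A + B` and their
Cauchy product; hence `𝒪^{ℏ,ℏ⁻¹}(ρ)` is a subring of the ring of formal series
`∑ A(m,n) x^m ℏ^{-n}`. -/
theorem memOhh_add_and_mul (s r : ℕ) (hr : 1 ≤ r) (hrs : r ≤ s)
    (ξ : Fin r → ℝ) (hξ : ∀ a, 0 ≤ ξ a)
    (A B : (Fin s → ℕ) → ℤ → ℂ)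
    (hA : MemOhh s r hrs ξ A) (hB : MemOhh s r hrs ξ B) :
    MemOhh s r hrs ξ (fun m n => A m n + B m n) ∧
    MemOhh s r hrs ξ (cauchyProdZ s A B) :=
  memOhh_add_and_mul_general s r hrs ξ hξ A B hA hB
end

section
/- The class 𝒪^{ℏ}(ρ) is a local ring: it is closed under the Cauchy product (A·B)(m,n) = Σ_{m₁+m₂=m} Σ_{n₁+n₂=n} A(m₁,n₁)B(m₂,n₂), and every A ∈ 𝒪^{ℏ}(ρ) with A(0,0) ≠ 0 is invertible within 𝒪^{ℏ}(ρ); that is, the unique family A⁻¹ with A·A⁻¹ equal to the identity family (value 1 at (m,n)=(0,0) and 0 elsewhere) again satisfies A⁻¹(m,n) = 0 whenever n > ⟨ρ,m⟩ together with a bound |A⁻¹(m,n)| ≤ B'·C'^{|m|+n}·n! for some constants B', C' > 0. -/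
/-!
The support condition is preserved because `⟨ρ, ·⟩` is additive: if `n₁ + n₂ > ⟨ρ, m₁ + m₂⟩`
then `n₁ > ⟨ρ, m₁⟩` or `n₂ > ⟨ρ, m₂⟩`, so every term of a Cauchy sum has a vanishing factor.
The factorial bounds multiply because `n₁! n₂! ≤ (n₁ + n₂)!`, and the at most `2 ^ (|m| + n)`
terms of the Cauchy sum are absorbed by doubling `C`.

The inverse is defined by the recursion
`A⁻¹(m, n) = A(0,0)⁻¹ (δ(m, n) - ∑_{(m₁,n₁) ≠ 0} A(m₁, n₁) A⁻¹(m - m₁, n - n₁))` on `|m| + n`,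
which is equivalent to `A · A⁻¹ = δ`; this gives existence and uniqueness, and the support
condition follows by the same induction. For the bound put `C' = (C + 1) / t` with `t` small:
the recursion bounds `|A⁻¹(m, n)|` by `|A(0,0)|⁻¹ (1 + B B' C'^(|m|+n) n! ∑_{p ≠ 0} t^|p|)`,
and `∑_{p ≠ 0} t^|p| ≤ 2^(s+2) t` makes this at most `B' C'^(|m|+n) n!` for `B' = 2 / |A(0,0)|`.
-/

open scoped BigOperators Classical

/-- Membership in the class `𝒪^{ℏ}(ρ)` of coefficient families `A : ℕ^s × ℕ → ℂ`:
(i) `A(m,n) = 0` whenever `n > ⟨ρ,m⟩`;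
(ii) there are `B, C > 0` with `|A(m,n)| ≤ B C^{|m|+n} n!` for all `m, n`. -/
def MemOh (s r : ℕ) (hrs : r ≤ s) (ξ : Fin r → ℝ) (A : (Fin s → ℕ) → ℕ → ℂ) : Prop :=
  (∀ (m : Fin s → ℕ) (n : ℕ), nefPairing s r hrs ξ m < (n : ℝ) → A m n = 0) ∧
  (∃ B C : ℝ, 0 < B ∧ 0 < C ∧ ∀ (m : Fin s → ℕ) (n : ℕ),
    ‖A m n‖ ≤ B * C ^ ((∑ j, m j) + n) * (Nat.factorial n : ℝ))

/-- The Cauchy product `(A·B)(m,n) = ∑_{m₁+m₂=m} ∑_{n₁+n₂=n} A(m₁,n₁) B(m₂,n₂)` of two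
coefficient families indexed by `ℕ^s × ℕ` (a finite sum, written as a `tsum`). -/
noncomputable def cauchyProdN (s : ℕ) (A B : (Fin s → ℕ) → ℕ → ℂ) :
    (Fin s → ℕ) → ℕ → ℂ :=
  fun m n => ∑' p : (Fin s → ℕ) × ℕ,
    if p.1 ≤ m ∧ p.2 ≤ n then A p.1 p.2 * B (fun j => m j - p.1 j) (n - p.2) else 0

/-- The identity coefficient family: value `1` at `(m,n) = (0,0)` and `0` elsewhere. -/
def deltaFam (s : ℕ) : (Fin s → ℕ) → ℕ → ℂ :=
  fun m n => if m = 0 ∧ n = 0 then 1 else 0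

open Finset
open scoped Nat

section Degree

variable {s : ℕ}

def totalDeg (m : Fin s → ℕ) (n : ℕ) : ℕ := (∑ j, m j) + n

lemma totalDeg_sub_add_totalDeg {m p₁ : Fin s → ℕ} {n p₂ : ℕ} (h₁ : p₁ ≤ m) (h₂ : p₂ ≤ n) :
    totalDeg (fun j => m j - p₁ j) (n - p₂) + totalDeg p₁ p₂ = totalDeg m n := by
  have : ∑ j, (m j - p₁ j) + ∑ j, p₁ j = ∑ j, m j := by
    rw [← sum_add_distrib]
    exact sum_congr rfl fun j _ => Nat.sub_add_cancel (h₁ j)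
  simp only [totalDeg]
  omega

lemma totalDeg_eq_zero {m : Fin s → ℕ} {n : ℕ} : totalDeg m n = 0 ↔ (m, n) = 0 := by
  simp [totalDeg, funext_iff, sum_eq_zero_iff]

lemma totalDeg_sub_lt {m : Fin s → ℕ} {n : ℕ} {p : (Fin s → ℕ) × ℕ}
    (hp : p ∈ (Iic m ×ˢ Iic n).erase 0) :
    totalDeg (fun j => m j - p.1 j) (n - p.2) < totalDeg m n := by
  obtain ⟨hp₀, h₁, h₂⟩ : p ≠ 0 ∧ p.1 ≤ m ∧ p.2 ≤ n := by simpa using hp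
  have hpos : totalDeg p.1 p.2 ≠ 0 := fun h => hp₀ (totalDeg_eq_zero.1 h)
  have := totalDeg_sub_add_totalDeg h₁ h₂
  omega

theorem totalDeg_induction {motive : (Fin s → ℕ) → ℕ → Prop}
    (ind : ∀ m n, (∀ p : (Fin s → ℕ) × ℕ, p ∈ (Iic m ×ˢ Iic n).erase 0 →
      motive (fun j => m j - p.1 j) (n - p.2)) → motive m n)
    (m : Fin s → ℕ) (n : ℕ) : motive m n := by
  induction h : totalDeg m n using Nat.strong_induction_on generalizing m n with
  | _ k ih => exact ind m n fun p hp => ih _ (h ▸ totalDeg_sub_lt hp) _ _ rfl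

lemma card_Iic_prod_Iic_le (m : Fin s → ℕ) (n : ℕ) :
    #(Iic m ×ˢ Iic n) ≤ 2 ^ totalDeg m n := by
  rw [card_product, Pi.card_Iic, totalDeg, pow_add, ← prod_pow_eq_pow_sum]
  simp only [Nat.card_Iic]
  gcongr <;> exact Nat.lt_two_pow_self

lemma sum_half_pow_totalDeg_le (m : Fin s → ℕ) (n : ℕ) :
    ∑ p ∈ Iic m ×ˢ Iic n, (1 / 2 : ℝ) ^ totalDeg p.1 p.2 ≤ 2 ^ (s + 1) := by
  have hgeom (k : ℕ) : ∑ i ∈ Iic k, (1 / 2 : ℝ) ^ i ≤ 2 := by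
    rw [← Nat.range_succ_eq_Iic]
    exact sum_geometric_two_le _
  calc ∑ p ∈ Iic m ×ˢ Iic n, (1 / 2 : ℝ) ^ totalDeg p.1 p.2
      = (∏ j, ∑ i ∈ Iic (m j), (1 / 2 : ℝ) ^ i) * ∑ i ∈ Iic n, (1 / 2 : ℝ) ^ i := by
        rw [prod_univ_sum, sum_mul_sum, sum_product]
        simp only [totalDeg, pow_add, prod_pow_eq_pow_sum]
        rfl
    _ ≤ (∏ _j : Fin s, (2 : ℝ)) * 2 := by
        gcongr <;> apply hgeom
    _ = 2 ^ (s + 1) := by simp [pow_succ]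

lemma sum_erase_pow_totalDeg_le {t : ℝ} (ht₀ : 0 ≤ t) (ht : 2 * t ≤ 1)
    (m : Fin s → ℕ) (n : ℕ) :
    ∑ p ∈ (Iic m ×ˢ Iic n).erase 0, t ^ totalDeg p.1 p.2 ≤ 2 ^ (s + 2) * t := by
  calc ∑ p ∈ (Iic m ×ˢ Iic n).erase 0, t ^ totalDeg p.1 p.2
      ≤ ∑ p ∈ (Iic m ×ˢ Iic n).erase 0, 2 * t * (1 / 2) ^ totalDeg p.1 p.2 := by
        refine sum_le_sum fun p hp => ?_
        have hd : totalDeg p.1 p.2 ≠ 0 := fun h => (ne_of_mem_erase hp) (totalDeg_eq_zero.1 h)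
        calc t ^ totalDeg p.1 p.2
            = (2 * t) ^ totalDeg p.1 p.2 * (1 / 2) ^ totalDeg p.1 p.2 := by
              rw [← mul_pow]; ring_nf
          _ ≤ 2 * t * (1 / 2) ^ totalDeg p.1 p.2 := by
              gcongr
              exact pow_le_of_le_one (by positivity) ht hd
    _ ≤ 2 * t * ∑ p ∈ Iic m ×ˢ Iic n, (1 / 2 : ℝ) ^ totalDeg p.1 p.2 := by
        rw [← mul_sum]
        gcongr
        exact erase_subset _ _
    _ ≤ 2 * t * 2 ^ (s + 1) := by gcongr; exact sum_half_pow_totalDeg_le m n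
    _ = 2 ^ (s + 2) * t := by ring

end Degree

section CauchyProduct

variable {s r : ℕ}

lemma cauchyProdN_apply (A B : (Fin s → ℕ) → ℕ → ℂ) (m : Fin s → ℕ) (n : ℕ) :
    cauchyProdN s A B m n =
      ∑ p ∈ Iic m ×ˢ Iic n, A p.1 p.2 * B (fun j => m j - p.1 j) (n - p.2) := by
  rw [cauchyProdN, tsum_eq_sum (s := Iic m ×ˢ Iic n)]
  · exact sum_congr rfl fun p hp => if_pos (by simpa using hp)
  · exact fun p hp => if_neg (by simpa using hp)

lemma cauchyProdN_apply_eq_add_sum_erase (A B : (Fin s → ℕ) → ℕ → ℂ) (m : Fin s → ℕ) (n : ℕ) :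
    cauchyProdN s A B m n = A 0 0 * B m n +
      ∑ p ∈ (Iic m ×ˢ Iic n).erase 0, A p.1 p.2 * B (fun j => m j - p.1 j) (n - p.2) := by
  rw [cauchyProdN_apply, ← add_sum_erase _ _ (by simp : (0 : (Fin s → ℕ) × ℕ) ∈ Iic m ×ˢ Iic n)]
  simp

lemma nefPairing_zero (hrs : r ≤ s) (ξ : Fin r → ℝ) : nefPairing s r hrs ξ 0 = 0 := by
  simp [nefPairing]

lemma nefPairing_sub (hrs : r ≤ s) (ξ : Fin r → ℝ) {m p : Fin s → ℕ} (h : p ≤ m) :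
    nefPairing s r hrs ξ (fun j => m j - p j) =
      nefPairing s r hrs ξ m - nefPairing s r hrs ξ p := by
  simp only [nefPairing, ← sum_sub_distrib, Nat.cast_sub (h _), mul_sub]

lemma nefPairing_lt_or_nefPairing_sub_lt (hrs : r ≤ s) (ξ : Fin r → ℝ) {m p₁ : Fin s → ℕ}
    {n p₂ : ℕ} (h₁ : p₁ ≤ m) (h₂ : p₂ ≤ n) (h : nefPairing s r hrs ξ m < n) :
    nefPairing s r hrs ξ p₁ < p₂ ∨
      nefPairing s r hrs ξ (fun j => m j - p₁ j) < (n - p₂ : ℕ) := by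
  by_contra! hle
  rw [nefPairing_sub hrs ξ h₁, Nat.cast_sub h₂] at hle
  linarith [hle.1, hle.2]

def SupportInCone (hrs : r ≤ s) (ξ : Fin r → ℝ) (A : (Fin s → ℕ) → ℕ → ℂ) : Prop :=
  ∀ (m : Fin s → ℕ) (n : ℕ), nefPairing s r hrs ξ m < n → A m n = 0

lemma SupportInCone.cauchyProdN {hrs : r ≤ s} {ξ : Fin r → ℝ} {A B : (Fin s → ℕ) → ℕ → ℂ}
    (hA : SupportInCone hrs ξ A) (hB : SupportInCone hrs ξ B) :
    SupportInCone hrs ξ (cauchyProdN s A B) := by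
  intro m n hmn
  rw [cauchyProdN_apply]
  refine sum_eq_zero fun p hp => ?_
  obtain ⟨h₁, h₂⟩ : p.1 ≤ m ∧ p.2 ≤ n := by simpa using hp
  rcases nefPairing_lt_or_nefPairing_sub_lt hrs ξ h₁ h₂ hmn with h | h
  · rw [hA _ _ h, zero_mul]
  · rw [hB _ _ h, mul_zero]

lemma norm_mul_le_mul_factorial {x y : ℂ} {b₁ b₂ : ℝ} {k n : ℕ} (hk : k ≤ n)
    (hx : ‖x‖ ≤ b₁ * k !) (hy : ‖y‖ ≤ b₂ * (n - k)!) : ‖x * y‖ ≤ b₁ * b₂ * n ! := by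
  have hb₁ : 0 ≤ b₁ := nonneg_of_mul_nonneg_left ((norm_nonneg _).trans hx) (by positivity)
  have hb₂ : 0 ≤ b₂ := nonneg_of_mul_nonneg_left ((norm_nonneg _).trans hy) (by positivity)
  have hfact : (k ! * (n - k)! : ℝ) ≤ n ! := by
    exact_mod_cast Nat.le_of_dvd n.factorial_pos (Nat.factorial_mul_factorial_dvd_factorial hk)
  calc ‖x * y‖ ≤ (b₁ * k !) * (b₂ * (n - k)!) := by
        rw [norm_mul]; exact mul_le_mul hx hy (norm_nonneg _) ((norm_nonneg _).trans hx)
    _ = b₁ * b₂ * (k ! * (n - k)! : ℝ) := by ring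
    _ ≤ b₁ * b₂ * n ! := by gcongr

def FactorialBound (B C : ℝ) (A : (Fin s → ℕ) → ℕ → ℂ) : Prop :=
  ∀ m n, ‖A m n‖ ≤ B * C ^ totalDeg m n * n !

namespace FactorialBound

variable {A B' : (Fin s → ℕ) → ℕ → ℂ} {B C B₁ B₂ C' : ℝ}

lemma norm_apply_zero_le (h : FactorialBound B C A) : ‖A 0 0‖ ≤ B := by
  simpa [totalDeg] using h 0 0

lemma mono (h : FactorialBound B C A) (hC : 0 ≤ C) (hCC' : C ≤ C') : FactorialBound B C' A :=
  fun m n => (h m n).trans <| by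
    have := (norm_nonneg _).trans h.norm_apply_zero_le
    gcongr

lemma cauchyProdN (hA : FactorialBound B₁ C A) (hB : FactorialBound B₂ C B') (hC : 0 ≤ C) :
    FactorialBound (B₁ * B₂) (2 * C) (_root_.cauchyProdN s A B') := by
  intro m n
  have hterm : ∀ p ∈ Iic m ×ˢ Iic n, ‖A p.1 p.2 * B' (fun j => m j - p.1 j) (n - p.2)‖ ≤
      B₁ * B₂ * C ^ totalDeg m n * n ! := by
    intro p hp
    obtain ⟨h₁, h₂⟩ : p.1 ≤ m ∧ p.2 ≤ n := by simpa using hp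
    calc _ ≤ B₁ * C ^ totalDeg p.1 p.2 *
            (B₂ * C ^ totalDeg (fun j => m j - p.1 j) (n - p.2)) * n ! :=
          norm_mul_le_mul_factorial h₂ (hA _ _) (hB _ _)
      _ = B₁ * B₂ * C ^ totalDeg m n * n ! := by
          rw [← totalDeg_sub_add_totalDeg h₁ h₂, pow_add]; ring
  have hB₁ := (norm_nonneg _).trans hA.norm_apply_zero_le
  have hB₂ := (norm_nonneg _).trans hB.norm_apply_zero_le
  calc ‖_root_.cauchyProdN s A B' m n‖
      ≤ #(Iic m ×ˢ Iic n) * (B₁ * B₂ * C ^ totalDeg m n * n !) := by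
        rw [cauchyProdN_apply]
        exact ((norm_sum_le _ _).trans (sum_le_card_nsmul _ _ _ hterm)).trans_eq
          (nsmul_eq_mul _ _)
    _ ≤ 2 ^ totalDeg m n * (B₁ * B₂ * C ^ totalDeg m n * n !) := by
        gcongr; exact_mod_cast card_Iic_prod_Iic_le m n
    _ = B₁ * B₂ * (2 * C) ^ totalDeg m n * n ! := by ring

end FactorialBound

lemma norm_sum_erase_mul_le {A A' : (Fin s → ℕ) → ℕ → ℂ} {B C B' C' t : ℝ} {m : Fin s → ℕ}
    {n : ℕ} (hA : FactorialBound B C A) (hC : 0 ≤ C) (ht₀ : 0 < t) (ht : 2 * t ≤ 1)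
    (hCt : C ≤ t * C') (hB' : 0 ≤ B')
    (hA' : ∀ p ∈ (Iic m ×ˢ Iic n).erase 0, ‖A' (fun j => m j - p.1 j) (n - p.2)‖ ≤
      B' * C' ^ totalDeg (fun j => m j - p.1 j) (n - p.2) * (n - p.2)!) :
    ‖∑ p ∈ (Iic m ×ˢ Iic n).erase 0, A p.1 p.2 * A' (fun j => m j - p.1 j) (n - p.2)‖ ≤
      2 ^ (s + 2) * t * B * (B' * C' ^ totalDeg m n * n !) := by
  have hB : 0 ≤ B := (norm_nonneg _).trans hA.norm_apply_zero_le
  have hC' : 0 ≤ C' := nonneg_of_mul_nonneg_right (hC.trans hCt) ht₀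
  have hterm : ∀ p ∈ (Iic m ×ˢ Iic n).erase 0,
      ‖A p.1 p.2 * A' (fun j => m j - p.1 j) (n - p.2)‖ ≤
        B * (B' * C' ^ totalDeg m n * n !) * t ^ totalDeg p.1 p.2 := by
    intro p hp
    obtain ⟨-, h₁, h₂⟩ : p ≠ 0 ∧ p.1 ≤ m ∧ p.2 ≤ n := by simpa using hp
    calc _ ≤ B * C ^ totalDeg p.1 p.2 *
            (B' * C' ^ totalDeg (fun j => m j - p.1 j) (n - p.2)) * n ! :=
          norm_mul_le_mul_factorial h₂ (hA _ _) (hA' p hp)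
      _ ≤ B * (t * C') ^ totalDeg p.1 p.2 *
            (B' * C' ^ totalDeg (fun j => m j - p.1 j) (n - p.2)) * n ! := by gcongr
      _ = B * (B' * C' ^ totalDeg m n * n !) * t ^ totalDeg p.1 p.2 := by
          rw [mul_pow, ← totalDeg_sub_add_totalDeg h₁ h₂, pow_add]; ring
  calc _ ≤ ∑ p ∈ (Iic m ×ˢ Iic n).erase 0,
          B * (B' * C' ^ totalDeg m n * n !) * t ^ totalDeg p.1 p.2 :=
        (norm_sum_le _ _).trans (sum_le_sum hterm)
    _ ≤ B * (B' * C' ^ totalDeg m n * n !) * (2 ^ (s + 2) * t) := by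
        rw [← mul_sum]
        gcongr
        exact sum_erase_pow_totalDeg_le ht₀.le ht m n
    _ = 2 ^ (s + 2) * t * B * (B' * C' ^ totalDeg m n * n !) := by ring

end CauchyProduct

section Inverse

variable {s r : ℕ}

noncomputable def cauchyInvN (A : (Fin s → ℕ) → ℕ → ℂ) (m : Fin s → ℕ) (n : ℕ) : ℂ :=
  (A 0 0)⁻¹ * (deltaFam s m n - ∑ p ∈ ((Iic m ×ˢ Iic n).erase 0).attach,
    A p.1.1 p.1.2 * cauchyInvN A (fun j => m j - p.1.1 j) (n - p.1.2))
termination_by totalDeg m n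
decreasing_by exact totalDeg_sub_lt p.2

lemma cauchyInvN_apply (A : (Fin s → ℕ) → ℕ → ℂ) (m : Fin s → ℕ) (n : ℕ) :
    cauchyInvN A m n = (A 0 0)⁻¹ * (deltaFam s m n - ∑ p ∈ (Iic m ×ˢ Iic n).erase 0,
      A p.1 p.2 * cauchyInvN A (fun j => m j - p.1 j) (n - p.2)) := by
  rw [cauchyInvN, ← sum_attach ((Iic m ×ˢ Iic n).erase 0)]

variable {A A' : (Fin s → ℕ) → ℕ → ℂ}

lemma cauchyProdN_eq_deltaFam_iff (ha : A 0 0 ≠ 0) :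
    cauchyProdN s A A' = deltaFam s ↔ ∀ m n, A' m n = (A 0 0)⁻¹ * (deltaFam s m n -
      ∑ p ∈ (Iic m ×ˢ Iic n).erase 0, A p.1 p.2 * A' (fun j => m j - p.1 j) (n - p.2)) := by
  simp only [funext_iff, cauchyProdN_apply_eq_add_sum_erase, eq_inv_mul_iff_mul_eq₀ ha,
    eq_sub_iff_add_eq]

lemma cauchyProdN_cauchyInvN (ha : A 0 0 ≠ 0) : cauchyProdN s A (cauchyInvN A) = deltaFam s :=
  (cauchyProdN_eq_deltaFam_iff ha).2 (cauchyInvN_apply A)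

lemma eq_cauchyInvN_of_cauchyProdN_eq_deltaFam (ha : A 0 0 ≠ 0)
    (h : cauchyProdN s A A' = deltaFam s) : A' = cauchyInvN A := by
  funext m n
  induction m, n using totalDeg_induction with
  | ind m n ih =>
    rw [(cauchyProdN_eq_deltaFam_iff ha).1 h, cauchyInvN_apply]
    congr 2
    exact sum_congr rfl fun p hp => by rw [ih p hp]

lemma SupportInCone.cauchyInvN {hrs : r ≤ s} {ξ : Fin r → ℝ} (hA : SupportInCone hrs ξ A) :
    SupportInCone hrs ξ (cauchyInvN A) := by
  intro m n
  induction m, n using totalDeg_induction with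
  | ind m n ih =>
    intro hmn
    have hδ : deltaFam s m n = 0 := if_neg <| by
      rintro ⟨rfl, rfl⟩
      simp [nefPairing_zero] at hmn
    rw [cauchyInvN_apply, hδ, sum_eq_zero, sub_zero, mul_zero]
    intro p hp
    obtain ⟨-, h₁, h₂⟩ : p ≠ 0 ∧ p.1 ≤ m ∧ p.2 ≤ n := by simpa using hp
    rcases nefPairing_lt_or_nefPairing_sub_lt hrs ξ h₁ h₂ hmn with h | h
    · rw [hA _ _ h, zero_mul]
    · rw [ih p hp h, mul_zero]

lemma FactorialBound.cauchyInvN {B C t : ℝ} (hA : FactorialBound B C A) (hC : 0 ≤ C)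
    (ha : A 0 0 ≠ 0) (ht₀ : 0 < t) (ht : 2 ^ (s + 3) * B * t ≤ ‖A 0 0‖) :
    FactorialBound (2 / ‖A 0 0‖) ((C + 1) / t) (_root_.cauchyInvN A) := by
  set a := ‖A 0 0‖
  set C' := (C + 1) / t
  have ha₀ : 0 < a := norm_pos_iff.2 ha
  have hB₀ : 0 < B := ha₀.trans_le hA.norm_apply_zero_le
  have htail : 2 ^ (s + 2) * t * B ≤ a / 2 := by rw [pow_succ] at ht; linarith
  have ht₁ : 2 * t ≤ 1 := by
    have h2 : (2 : ℝ) ≤ 2 ^ (s + 2) := le_self_pow₀ one_le_two (by omega)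
    have h4 : 2 ^ (s + 2) * t ≤ 1 :=
      le_of_mul_le_mul_left (by linarith [hA.norm_apply_zero_le]) hB₀
    nlinarith
  have hCt : C ≤ t * C' := by rw [mul_div_cancel₀ _ ht₀.ne']; linarith
  have hC'₁ : 1 ≤ C' := by rw [le_div_iff₀ ht₀]; linarith
  intro m n
  induction m, n using totalDeg_induction with
  | ind m n ih =>
    have hX : 1 ≤ C' ^ totalDeg m n * n ! :=
      one_le_mul_of_one_le_of_one_le (one_le_pow₀ hC'₁) (mod_cast n.factorial_pos)
    have hδ : ‖deltaFam s m n‖ ≤ 1 := by unfold deltaFam; split_ifs <;> simp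
    calc ‖_root_.cauchyInvN A m n‖
        ≤ a⁻¹ * (1 + 2 ^ (s + 2) * t * B * (2 / a * C' ^ totalDeg m n * n !)) := by
          rw [cauchyInvN_apply, norm_mul, norm_inv]
          gcongr
          exact (norm_sub_le _ _).trans <| add_le_add hδ <|
            norm_sum_erase_mul_le hA hC ht₀ ht₁ hCt (by positivity) ih
      _ ≤ a⁻¹ * (C' ^ totalDeg m n * n ! + a / 2 * (2 / a * (C' ^ totalDeg m n * n !))) := by
          rw [← mul_assoc (2 / a)]
          gcongr
      _ = 2 / a * C' ^ totalDeg m n * n ! := by field_simp; ring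

end Inverse

namespace MemOh

variable {s r : ℕ} {hrs : r ≤ s} {ξ : Fin r → ℝ} {A B : (Fin s → ℕ) → ℕ → ℂ}

lemma cauchyProdN (hA : MemOh s r hrs ξ A) (hB : MemOh s r hrs ξ B) :
    MemOh s r hrs ξ (_root_.cauchyProdN s A B) := by
  obtain ⟨hA_supp, B₁, C₁, hB₁, hC₁, hA_bd⟩ := hA
  obtain ⟨hB_supp, B₂, C₂, hB₂, hC₂, hB_bd⟩ := hB
  have hC : 0 < max C₁ C₂ := lt_max_of_lt_left hC₁
  exact ⟨SupportInCone.cauchyProdN hA_supp hB_supp, B₁ * B₂, 2 * max C₁ C₂, by positivity,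
    by positivity, FactorialBound.cauchyProdN (FactorialBound.mono hA_bd hC₁.le (le_max_left _ _))
      (FactorialBound.mono hB_bd hC₂.le (le_max_right _ _)) hC.le⟩

lemma cauchyInvN (hA : MemOh s r hrs ξ A) (ha : A 0 0 ≠ 0) :
    MemOh s r hrs ξ (_root_.cauchyInvN A) := by
  obtain ⟨hA_supp, B, C, hB, hC, hA_bd⟩ := hA
  have ha₀ : 0 < ‖A 0 0‖ := norm_pos_iff.2 ha
  exact ⟨SupportInCone.cauchyInvN hA_supp, _, _, by positivity, by positivity,
    FactorialBound.cauchyInvN (t := ‖A 0 0‖ / (2 ^ (s + 3) * B)) hA_bd hC.le ha (by positivity)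
      (mul_div_cancel₀ _ (by positivity)).le⟩

end MemOh

theorem memOh_localRing_general (s r : ℕ) (hrs : r ≤ s)
    (ξ : Fin r → ℝ) :
    (∀ A B : (Fin s → ℕ) → ℕ → ℂ, MemOh s r hrs ξ A → MemOh s r hrs ξ B →
      MemOh s r hrs ξ (cauchyProdN s A B)) ∧
    (∀ A : (Fin s → ℕ) → ℕ → ℂ, MemOh s r hrs ξ A → A 0 0 ≠ 0 →
      ∃ A' : (Fin s → ℕ) → ℕ → ℂ,
        cauchyProdN s A A' = deltaFam s ∧ MemOh s r hrs ξ A' ∧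
        ∀ A'' : (Fin s → ℕ) → ℕ → ℂ, cauchyProdN s A A'' = deltaFam s → A'' = A') :=
  ⟨fun _ _ hA hB => hA.cauchyProdN hB, fun A hA ha =>
    ⟨cauchyInvN A, cauchyProdN_cauchyInvN ha, hA.cauchyInvN ha,
      fun _ h => eq_cauchyInvN_of_cauchyProdN_eq_deltaFam ha h⟩⟩

/-- The class `𝒪^{ℏ}(ρ)` is a local ring: it is closed under the Cauchy
product, and every `A ∈ 𝒪^{ℏ}(ρ)` with `A(0,0) ≠ 0` is invertible within `𝒪^{ℏ}(ρ)` — the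
unique family `A⁻¹` with `A · A⁻¹` equal to the identity family again satisfies the support
condition (i) and a factorial-type bound (ii). -/
theorem memOh_localRing (s r : ℕ) (hr : 1 ≤ r) (hrs : r ≤ s)
    (ξ : Fin r → ℝ) (hξ : ∀ a, 0 ≤ ξ a) :
    (∀ A B : (Fin s → ℕ) → ℕ → ℂ, MemOh s r hrs ξ A → MemOh s r hrs ξ B →
      MemOh s r hrs ξ (cauchyProdN s A B)) ∧
    (∀ A : (Fin s → ℕ) → ℕ → ℂ, MemOh s r hrs ξ A → A 0 0 ≠ 0 →
      ∃ A' : (Fin s → ℕ) → ℕ → ℂ,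
        cauchyProdN s A A' = deltaFam s ∧ MemOh s r hrs ξ A' ∧
        ∀ A'' : (Fin s → ℕ) → ℕ → ℂ, cauchyProdN s A A'' = deltaFam s → A'' = A') :=
  memOh_localRing_general s r hrs ξ
end

section
/- Let 𝒜 be a complex unital normed algebra with submultiplicative norm (e.g. h×h complex matrices with the operator norm), let w ∈ 𝒜, let C₁ > 0 and C₂ ≥ 1 be reals, let M, K ∈ ℕ, and let (T_j)_{j≥0} be a sequence in 𝒜 with ‖T_j‖ ≤ C₁·C₂^{M+j}/j! for all j ≥ 0. For each integer n with −K ≤ n, define T̃_n = Σ_{l = max(0,−n)}^{K} e_l(1,…,K) · w^{K−l} · T_{n+l}, where e_l(1,…,K) = Σ_{1≤k₁<⋯<k_l≤K} k₁k₂⋯k_l (and e₀ = 1). Then ‖T̃_n‖ ≤ C₁ · C₂^{M+|n|} · 2^K (‖w‖ + 2C₂)^K · (1/n!) for all n ≥ 0, and ‖T̃_n‖ ≤ C₁ · C₂^{M+|n|} · 2^K (‖w‖ + 2C₂)^K · (−n)! for all −K ≤ n ≤ 0. -/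
open scoped BigOperators

/-- Product of a set of distinct integers in `[1, K]` is at most the descending factorial. -/
lemma prod_le_descFactorial : ∀ (K : ℕ) (s : Finset ℕ), s ⊆ Finset.Icc 1 K →
    ∏ k ∈ s, k ≤ K.descFactorial s.card := by
  intro K
  induction K with
  | zero =>
      intro s hs
      have h0 : Finset.Icc 1 0 = (∅ : Finset ℕ) := Finset.Icc_eq_empty (by norm_num)
      rw [h0] at hs
      have : s = ∅ := Finset.subset_empty.mp hs
      simp [this]
  | succ K ih =>
      intro s hs
      by_cases h : K + 1 ∈ s
      · have herase : s.erase (K + 1) ⊆ Finset.Icc 1 K := by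
          intro x hx
          have hx1 := hs (Finset.mem_of_mem_erase hx)
          have hxne := Finset.ne_of_mem_erase hx
          simp only [Finset.mem_Icc] at hx1 ⊢
          omega
        have hpos : 1 ≤ s.card := Finset.card_pos.mpr ⟨_, h⟩
        have hcard : s.card = (s.erase (K + 1)).card + 1 := by
          rw [Finset.card_erase_of_mem h]; omega
        calc ∏ k ∈ s, k = (K + 1) * ∏ k ∈ s.erase (K + 1), k := by
              rw [← Finset.mul_prod_erase s _ h]
          _ ≤ (K + 1) * K.descFactorial (s.erase (K + 1)).card :=
              Nat.mul_le_mul_left _ (ih _ herase)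
          _ = (K + 1).descFactorial s.card := by
              rw [hcard, Nat.succ_descFactorial_succ]
      · have hsub : s ⊆ Finset.Icc 1 K := by
          intro x hx
          have hx1 := hs hx
          have hxne : x ≠ K + 1 := fun e => h (e ▸ hx)
          simp only [Finset.mem_Icc] at hx1 ⊢
          omega
        exact (ih s hsub).trans (Nat.descFactorial_le _ (Nat.le_succ K))

lemma choose_le_two_pow' (n k : ℕ) : n.choose k ≤ 2 ^ n := by
  rcases le_or_gt k n with h | h
  · calc n.choose k ≤ ∑ i ∈ Finset.range (n + 1), n.choose i :=
        Finset.single_le_sum (fun i _ => Nat.zero_le _) (Finset.mem_range.mpr (by omega))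
      _ = 2 ^ n := Nat.sum_range_choose n
  · simp [Nat.choose_eq_zero_of_lt h]

/-- Bound for the elementary symmetric polynomial `e_l(1, …, K)`. -/
lemma esymm_le (K l m : ℕ) (hm : m ≤ l) :
    (∑ s ∈ Finset.powersetCard l (Finset.Icc 1 K), ∏ k ∈ s, k)
      ≤ 2 ^ K * 2 ^ l * K.choose l * (m.factorial * (l - m).factorial) := by
  have h1 : ∀ s ∈ Finset.powersetCard l (Finset.Icc 1 K),
      ∏ k ∈ s, k ≤ K.descFactorial l := by
    intro s hs
    obtain ⟨hsub, hcard⟩ := Finset.mem_powersetCard.mp hs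
    simpa [hcard] using prod_le_descFactorial K s hsub
  have hfac : l.factorial ≤ 2 ^ l * (m.factorial * (l - m).factorial) := by
    calc l.factorial = l.choose m * (m.factorial * (l - m).factorial) := by
          rw [← Nat.choose_mul_factorial_mul_factorial hm]; ring
      _ ≤ 2 ^ l * (m.factorial * (l - m).factorial) :=
          Nat.mul_le_mul_right _ (choose_le_two_pow' l m)
  calc (∑ s ∈ Finset.powersetCard l (Finset.Icc 1 K), ∏ k ∈ s, k)
      ≤ (Finset.powersetCard l (Finset.Icc 1 K)).card * K.descFactorial l :=
        Finset.sum_le_card_nsmul _ _ _ h1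
    _ = K.choose l * (l.factorial * K.choose l) := by
        rw [Finset.card_powersetCard, Nat.card_Icc,
          Nat.descFactorial_eq_factorial_mul_choose]
        simp
    _ ≤ 2 ^ K * (l.factorial * K.choose l) :=
        Nat.mul_le_mul_right _ (choose_le_two_pow' K l)
    _ ≤ 2 ^ K * ((2 ^ l * (m.factorial * (l - m).factorial)) * K.choose l) :=
        Nat.mul_le_mul_left _ (Nat.mul_le_mul_right _ hfac)
    _ = 2 ^ K * 2 ^ l * K.choose l * (m.factorial * (l - m).factorial) := by ring

/-- The coefficient of `ℏ^{-n}` in `∏_{k=1}^{K} (w + kℏ) ⬝ ∑_{j ≥ 0} T_j ℏ^{-j}`: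
`T̃_n = ∑_{l = max(0,-n)}^{K} e_l(1,…,K) w^{K-l} T_{n+l}`, where
`e_l(1,…,K) = ∑_{1 ≤ k₁ < ⋯ < k_l ≤ K} k₁ ⋯ k_l` is the elementary symmetric polynomial. -/
noncomputable def hyperGeomCoeff {A : Type*} [NormedRing A] (w : A) (K : ℕ)
    (T : ℕ → A) (n : ℤ) : A :=
  ∑ l ∈ Finset.Icc ((-n).toNat) K,
    (∑ s ∈ Finset.powersetCard l (Finset.Icc 1 K), ∏ k ∈ s, k) •
      (w ^ (K - l) * T (n + l).toNat)

/-- Let `A` be a complex unital normed algebra with submultiplicative norm,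
`w ∈ A`, `C₁ > 0`, `C₂ ≥ 1`, `M, K ∈ ℕ`, and `(T_j)` a sequence with
`‖T_j‖ ≤ C₁ C₂^{M+j}/j!`.  Then the coefficients `T̃_n` (for `-K ≤ n`) of the hypergeometric
modification `∏_{k=1}^K (w + kℏ) ∑_j T_j ℏ^{-j}` satisfy
`‖T̃_n‖ ≤ C₁ C₂^{M+|n|} 2^K (‖w‖ + 2C₂)^K / n!` for `n ≥ 0` and
`‖T̃_n‖ ≤ C₁ C₂^{M+|n|} 2^K (‖w‖ + 2C₂)^K (-n)!` for `-K ≤ n ≤ 0`. -/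
theorem hypergeometric_modification_estimate {A : Type*} [NormedRing A]
    [NormedAlgebra ℂ A] (w : A) (C₁ C₂ : ℝ) (hC₁ : 0 < C₁) (hC₂ : 1 ≤ C₂)
    (M K : ℕ) (T : ℕ → A)
    (hT : ∀ j : ℕ, ‖T j‖ ≤ C₁ * C₂ ^ (M + j) / (Nat.factorial j : ℝ)) :
    ∀ n : ℤ, -(K : ℤ) ≤ n →
      (0 ≤ n → ‖hyperGeomCoeff w K T n‖
          ≤ C₁ * C₂ ^ (M + n.natAbs) * (2 ^ K * (‖w‖ + 2 * C₂) ^ K) *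
            (1 / (Nat.factorial n.toNat : ℝ))) ∧
      (n ≤ 0 → ‖hyperGeomCoeff w K T n‖
          ≤ C₁ * C₂ ^ (M + n.natAbs) * (2 ^ K * (‖w‖ + 2 * C₂) ^ K) *
            (Nat.factorial n.natAbs : ℝ)) := by
  intro n hn
  have hC₂0 : (0 : ℝ) < C₂ := lt_of_lt_of_le one_pos hC₂
  set E : ℕ → ℕ := fun l => ∑ s ∈ Finset.powersetCard l (Finset.Icc 1 K), ∏ k ∈ s, k
    with hE
  have hsmul : ∀ (e : ℕ) (x : A), ‖e • x‖ = (e : ℝ) * ‖x‖ := by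
    intro e x
    rw [← Nat.cast_smul_eq_nsmul ℂ, norm_smul, Complex.norm_natCast]
  have hwp : ∀ (p : ℕ) (x : A), ‖w ^ p * x‖ ≤ ‖w‖ ^ p * ‖x‖ := by
    intro p x
    cases p with
    | zero => simp
    | succ p =>
        exact (norm_mul_le _ _).trans
          (mul_le_mul_of_nonneg_right (norm_pow_le' w p.succ_pos) (norm_nonneg x))
  -- the generic summation step
  have key : ∀ F : ℝ,
      (∀ l ∈ Finset.Icc ((-n).toNat) K,
        (E l : ℝ) * (‖w‖ ^ (K - l) * ‖T (n + l).toNat‖)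
          ≤ C₁ * C₂ ^ (M + n.natAbs) * 2 ^ K *
              ((2 * C₂) ^ l * ‖w‖ ^ (K - l) * (K.choose l : ℝ)) * F) →
      (0 ≤ F) →
      ‖hyperGeomCoeff w K T n‖
        ≤ C₁ * C₂ ^ (M + n.natAbs) * (2 ^ K * (‖w‖ + 2 * C₂) ^ K) * F := by
    intro F hterm hF
    have hpow : ∑ l ∈ Finset.range (K + 1),
        (2 * C₂) ^ l * ‖w‖ ^ (K - l) * (K.choose l : ℝ) = (‖w‖ + 2 * C₂) ^ K := by
      rw [add_comm (‖w‖) (2 * C₂)]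
      exact (add_pow (2 * C₂) (‖w‖) K).symm
    calc ‖hyperGeomCoeff w K T n‖
        ≤ ∑ l ∈ Finset.Icc ((-n).toNat) K,
            ‖E l • (w ^ (K - l) * T (n + l).toNat)‖ := norm_sum_le _ _
      _ = ∑ l ∈ Finset.Icc ((-n).toNat) K,
            (E l : ℝ) * ‖w ^ (K - l) * T (n + l).toNat‖ := by
          exact Finset.sum_congr rfl fun l _ => hsmul _ _
      _ ≤ ∑ l ∈ Finset.Icc ((-n).toNat) K,
            (E l : ℝ) * (‖w‖ ^ (K - l) * ‖T (n + l).toNat‖) := by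
          refine Finset.sum_le_sum fun l _ => ?_
          exact mul_le_mul_of_nonneg_left (hwp _ _) (Nat.cast_nonneg _)
      _ ≤ ∑ l ∈ Finset.Icc ((-n).toNat) K,
            C₁ * C₂ ^ (M + n.natAbs) * 2 ^ K *
              ((2 * C₂) ^ l * ‖w‖ ^ (K - l) * (K.choose l : ℝ)) * F :=
          Finset.sum_le_sum hterm
      _ ≤ ∑ l ∈ Finset.range (K + 1),
            C₁ * C₂ ^ (M + n.natAbs) * 2 ^ K *
              ((2 * C₂) ^ l * ‖w‖ ^ (K - l) * (K.choose l : ℝ)) * F := by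
          refine Finset.sum_le_sum_of_subset_of_nonneg ?_ fun l _ _ => by positivity
          intro l hl
          simp only [Finset.mem_Icc, Finset.mem_range] at hl ⊢
          omega
      _ = C₁ * C₂ ^ (M + n.natAbs) * (2 ^ K * (‖w‖ + 2 * C₂) ^ K) * F := by
          rw [← Finset.sum_mul, ← Finset.mul_sum, hpow]
          ring
  constructor
  · -- case n ≥ 0
    intro hn0
    set N := n.toNat with hN
    have hmz : (-n).toNat = 0 := by omega
    have hna : n.natAbs = N := by omega
    refine key (1 / (Nat.factorial N : ℝ)) ?_ (by positivity)
    intro l hl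
    rw [Finset.mem_Icc] at hl
    have htn : (n + l).toNat = N + l := by omega
    rw [htn, hna]
    -- Nat inequality
    have hnat : E l * N.factorial
        ≤ 2 ^ K * 2 ^ l * K.choose l * (N + l).factorial := by
      have h1 : E l ≤ 2 ^ K * 2 ^ l * K.choose l * l.factorial := by
        have := esymm_le K l 0 (Nat.zero_le l)
        simpa using this
      have h2 : l.factorial * N.factorial ≤ (N + l).factorial := by
        have := Nat.factorial_mul_factorial_dvd_factorial_add l N
        have := Nat.le_of_dvd (Nat.factorial_pos (l + N)) this
        calc l.factorial * N.factorial ≤ (l + N).factorial := this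
          _ = (N + l).factorial := by rw [Nat.add_comm]
      calc E l * N.factorial ≤ (2 ^ K * 2 ^ l * K.choose l * l.factorial) * N.factorial :=
            Nat.mul_le_mul_right _ h1
        _ = 2 ^ K * 2 ^ l * K.choose l * (l.factorial * N.factorial) := by ring
        _ ≤ 2 ^ K * 2 ^ l * K.choose l * (N + l).factorial :=
            Nat.mul_le_mul_left _ h2
    have hdiv : (E l : ℝ) / ((N + l).factorial : ℝ)
        ≤ 2 ^ K * 2 ^ l * (K.choose l : ℝ) / (N.factorial : ℝ) := by
      rw [div_le_div_iff₀ (by positivity) (by positivity)]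
      exact_mod_cast hnat
    have hexp : M + (N + l) = (M + N) + l := by omega
    calc (E l : ℝ) * (‖w‖ ^ (K - l) * ‖T (N + l)‖)
        ≤ (E l : ℝ) * (‖w‖ ^ (K - l) * (C₁ * C₂ ^ (M + (N + l)) / ((N + l).factorial : ℝ))) := by
          refine mul_le_mul_of_nonneg_left ?_ (Nat.cast_nonneg _)
          exact mul_le_mul_of_nonneg_left (hT _) (by positivity)
      _ = (C₁ * C₂ ^ (M + N) * C₂ ^ l * ‖w‖ ^ (K - l)) *
            ((E l : ℝ) / ((N + l).factorial : ℝ)) := by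
          rw [hexp, pow_add]; ring
      _ ≤ (C₁ * C₂ ^ (M + N) * C₂ ^ l * ‖w‖ ^ (K - l)) *
            (2 ^ K * 2 ^ l * (K.choose l : ℝ) / (N.factorial : ℝ)) :=
          mul_le_mul_of_nonneg_left hdiv (by positivity)
      _ = C₁ * C₂ ^ (M + N) * 2 ^ K *
            ((2 * C₂) ^ l * ‖w‖ ^ (K - l) * (K.choose l : ℝ)) *
            (1 / (N.factorial : ℝ)) := by
          rw [mul_pow]; ring
  · -- case n ≤ 0
    intro hn0
    set m := n.natAbs with hm
    have hmz : (-n).toNat = m := by omega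
    refine key ((Nat.factorial m : ℝ)) ?_ (by positivity)
    intro l hl
    rw [Finset.mem_Icc, hmz] at hl
    obtain ⟨hml, hlK⟩ := hl
    have htn : (n + l).toNat = l - m := by omega
    rw [htn]
    have hnat : E l ≤ 2 ^ K * 2 ^ l * K.choose l * (m.factorial * (l - m).factorial) :=
      esymm_le K l m hml
    have hdiv : (E l : ℝ) / (((l - m).factorial : ℝ))
        ≤ 2 ^ K * 2 ^ l * (K.choose l : ℝ) * (m.factorial : ℝ) := by
      rw [div_le_iff₀ (by positivity)]
      calc (E l : ℝ) ≤ (2 ^ K * 2 ^ l * K.choose l * (m.factorial * (l - m).factorial) : ℕ) := by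
            exact_mod_cast hnat
        _ = 2 ^ K * 2 ^ l * (K.choose l : ℝ) * (m.factorial : ℝ) * ((l - m).factorial : ℝ) := by
            push_cast; ring
    have hC2pow : C₂ ^ (M + (l - m)) ≤ C₂ ^ ((M + m) + l) :=
      pow_le_pow_right₀ hC₂ (by omega)
    calc (E l : ℝ) * (‖w‖ ^ (K - l) * ‖T (l - m)‖)
        ≤ (E l : ℝ) * (‖w‖ ^ (K - l) * (C₁ * C₂ ^ (M + (l - m)) / (((l - m).factorial : ℝ)))) := by
          refine mul_le_mul_of_nonneg_left ?_ (Nat.cast_nonneg _)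
          exact mul_le_mul_of_nonneg_left (hT _) (by positivity)
      _ ≤ (E l : ℝ) * (‖w‖ ^ (K - l) * (C₁ * C₂ ^ ((M + m) + l) / (((l - m).factorial : ℝ)))) := by
          gcongr
      _ = (C₁ * C₂ ^ (M + m) * C₂ ^ l * ‖w‖ ^ (K - l)) *
            ((E l : ℝ) / (((l - m).factorial : ℝ))) := by
          rw [pow_add]; ring
      _ ≤ (C₁ * C₂ ^ (M + m) * C₂ ^ l * ‖w‖ ^ (K - l)) *
            (2 ^ K * 2 ^ l * (K.choose l : ℝ) * (m.factorial : ℝ)) :=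
          mul_le_mul_of_nonneg_left hdiv (by positivity)
      _ = C₁ * C₂ ^ (M + m) * 2 ^ K *
            ((2 * C₂) ^ l * ‖w‖ ^ (K - l) * (K.choose l : ℝ)) * (m.factorial : ℝ) := by
          rw [mul_pow]; ring
end

section
/- Let k ≥ 1 and let d₁,…,d_k be integers with D = d₁ + ⋯ + d_k. If D ≥ 0, then D! · Π_{i : d_i < 0} (−d_i)! ≤ k^{Σ_i |d_i|} · Π_{i : d_i > 0} d_i!. If D ≤ 0, then Π_{i : d_i < 0} (−d_i)! ≤ (2k)^{Σ_i |d_i|} · (−D)! · Π_{i : d_i > 0} d_i!. -/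
open scoped BigOperators
open Finset

lemma choose_mul_pow_le (m n i : ℕ) (hi : i ≤ n) :
    n.choose i * m ^ i ≤ (m + 1) ^ n := by
  have : (m + 1) ^ n = ∑ j ∈ range (n + 1), m ^ j * n.choose j := by
    rw [add_pow]; apply Finset.sum_congr rfl; intro j hj; rw [one_pow, Nat.cast_id]; ring
  rw [this]
  calc n.choose i * m ^ i = m ^ i * n.choose i := by ring
  _ ≤ ∑ j ∈ range (n + 1), m ^ j * n.choose j :=
      Finset.single_le_sum (f := fun j => m ^ j * n.choose j) (fun j _ => Nat.zero_le _)
        (mem_range.mpr (Nat.lt_succ_of_le hi))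

lemma factorial_sum_le {ι : Type*} [DecidableEq ι] (s : Finset ι) (a : ι → ℕ) :
    Nat.factorial (∑ i ∈ s, a i) ≤ s.card ^ (∑ i ∈ s, a i) * ∏ i ∈ s, Nat.factorial (a i) := by
  induction s using Finset.cons_induction with
  | empty => simp
  | cons x t hx ih =>
    rw [Finset.sum_cons, Finset.prod_cons, Finset.card_cons]
    set S := ∑ i ∈ t, a i
    set m := t.card
    have key : Nat.factorial (a x + S) =
        (a x + S).choose S * (a x).factorial * S.factorial := by
      rw [Nat.add_choose_mul_factorial_mul_factorial]
    rw [key]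
    calc (a x + S).choose S * (a x).factorial * S.factorial
        ≤ (a x + S).choose S * (a x).factorial * (m ^ S * ∏ i ∈ t, Nat.factorial (a i)) :=
          Nat.mul_le_mul_left _ ih
      _ = ((a x + S).choose S * m ^ S) * ((a x).factorial * ∏ i ∈ t, Nat.factorial (a i)) := by
          ring
      _ ≤ (m + 1) ^ (a x + S) * ((a x).factorial * ∏ i ∈ t, Nat.factorial (a i)) :=
          Nat.mul_le_mul_right _ (choose_mul_pow_le m (a x + S) S (Nat.le_add_left _ _))

/-- Let `d₁, …, d_k` be integers with sum `D`.  If `D ≥ 0` then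
`D! ∏_{d_i < 0} (-d_i)! ≤ k^{∑|d_i|} ∏_{d_i > 0} d_i!`; if `D ≤ 0` then
`∏_{d_i < 0} (-d_i)! ≤ (2k)^{∑|d_i|} (-D)! ∏_{d_i > 0} d_i!`. -/
theorem factorial_ratio_estimate (k : ℕ) (hk : 1 ≤ k) (d : Fin k → ℤ) :
    (0 ≤ ∑ i, d i →
      Nat.factorial (∑ i, d i).toNat *
          ∏ i ∈ Finset.univ.filter (fun i => d i < 0), Nat.factorial (d i).natAbs
        ≤ k ^ (∑ i, (d i).natAbs) *
          ∏ i ∈ Finset.univ.filter (fun i => 0 < d i), Nat.factorial (d i).toNat) ∧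
    ((∑ i, d i) ≤ 0 →
      ∏ i ∈ Finset.univ.filter (fun i => d i < 0), Nat.factorial (d i).natAbs
        ≤ (2 * k) ^ (∑ i, (d i).natAbs) * Nat.factorial (∑ i, d i).natAbs *
          ∏ i ∈ Finset.univ.filter (fun i => 0 < d i), Nat.factorial (d i).toNat) := by
  classical
  set sP := Finset.univ.filter (fun i => 0 < d i) with hsP
  set sN := Finset.univ.filter (fun i => d i < 0) with hsN
  set P := ∑ i ∈ sP, (d i).toNat with hPdef
  set N := ∑ i ∈ sN, (d i).natAbs with hNdef
  have e1 : P = ∑ i, (d i).toNat := by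
    rw [hPdef, hsP, Finset.sum_filter]
    refine Finset.sum_congr rfl fun i _ => ?_
    split <;> omega
  have e2 : N = ∑ i, (-(d i)).toNat := by
    rw [hNdef, hsN, Finset.sum_filter]
    refine Finset.sum_congr rfl fun i _ => ?_
    split <;> omega
  have hPN : ∑ i, (d i).natAbs = P + N := by
    rw [e1, e2, ← Finset.sum_add_distrib]
    refine Finset.sum_congr rfl fun i _ => ?_
    omega
  have hsum : ∑ i, d i = (P : ℤ) - (N : ℤ) := by
    have : ∑ i, d i = ∑ i, (((d i).toNat : ℤ) - ((-(d i)).toNat : ℤ)) := by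
      refine Finset.sum_congr rfl fun i _ => ?_
      omega
    rw [this, Finset.sum_sub_distrib, e1, e2]
    push_cast
    ring
  have hprodN : ∏ i ∈ sN, Nat.factorial (d i).natAbs ≤ N.factorial :=
    Nat.le_of_dvd (Nat.factorial_pos _)
      (Nat.prod_factorial_dvd_factorial_sum _ _)
  have hcard : sP.card ≤ k := by
    calc sP.card ≤ Finset.univ.card := Finset.card_filter_le _ _
    _ = k := by simp
  have hP : P.factorial ≤ k ^ P * ∏ i ∈ sP, Nat.factorial (d i).toNat := by
    calc P.factorial ≤ sP.card ^ P * ∏ i ∈ sP, Nat.factorial (d i).toNat :=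
          factorial_sum_le sP _
      _ ≤ k ^ P * ∏ i ∈ sP, Nat.factorial (d i).toNat :=
          Nat.mul_le_mul_right _ (Nat.pow_le_pow_left hcard _)
  constructor
  · intro h
    set D := (∑ i, d i).toNat with hDdef
    have hD : D + N = P := by omega
    calc D.factorial * ∏ i ∈ sN, Nat.factorial (d i).natAbs
        ≤ D.factorial * N.factorial := Nat.mul_le_mul_left _ hprodN
      _ ≤ (D + N).factorial := Nat.le_of_dvd (Nat.factorial_pos _)
          (Nat.factorial_mul_factorial_dvd_factorial_add _ _)
      _ = P.factorial := by rw [hD]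
      _ ≤ k ^ P * ∏ i ∈ sP, Nat.factorial (d i).toNat := hP
      _ ≤ k ^ (∑ i, (d i).natAbs) * ∏ i ∈ sP, Nat.factorial (d i).toNat := by
          refine Nat.mul_le_mul_right _ (Nat.pow_le_pow_right hk ?_)
          rw [hPN]; omega
  · intro h
    set M := (∑ i, d i).natAbs with hMdef
    have hM : N = M + P := by omega
    have hchoose : (M + P).choose P ≤ 2 ^ (M + P) := by
      have := choose_mul_pow_le 1 (M + P) P (Nat.le_add_left _ _)
      simpa using this
    calc ∏ i ∈ sN, Nat.factorial (d i).natAbs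
        ≤ N.factorial := hprodN
      _ = (M + P).choose P * M.factorial * P.factorial := by
          rw [Nat.add_choose_mul_factorial_mul_factorial, hM]
      _ ≤ 2 ^ (M + P) * M.factorial * (k ^ P * ∏ i ∈ sP, Nat.factorial (d i).toNat) := by
          exact Nat.mul_le_mul (Nat.mul_le_mul_right _ hchoose) hP
      _ = (2 ^ (M + P) * k ^ P) * M.factorial * ∏ i ∈ sP, Nat.factorial (d i).toNat := by
          ring
      _ ≤ (2 * k) ^ (∑ i, (d i).natAbs) * M.factorial *
            ∏ i ∈ sP, Nat.factorial (d i).toNat := by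
          refine Nat.mul_le_mul_right _ (Nat.mul_le_mul_right _ ?_)
          rw [hPN, mul_pow]
          have h2 : 2 ^ (M + P) ≤ 2 ^ (P + N) := Nat.pow_le_pow_right (by norm_num) (by omega)
          have h3 : k ^ P ≤ k ^ (P + N) := Nat.pow_le_pow_right hk (by omega)
          exact Nat.mul_le_mul h2 h3
end
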